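/- arXiv:2209.01269 — 2 statements merged into one kernel-verified Lean document; each statement's English description precedes it below -/
import Mathlib

section
/- Let a finite set of data points x_1,…,x_n be given in a set X, let g : X → ℝ^l and h : X × Θ₂ → ℝ^d be functions, where Θ₂ is an arbitrary set. Define the probability simplex Δ = {ω ∈ ℝ^n : ω_i ≥ 0 for all i and ∑_{i=1}^n ω_i = 1}, the constraint set W_G = {ω ∈ Δ : ∑_{i=1}^n ω_i g(x_i) = 0}, for each θ₂ ∈ Θ₂ the set W(θ₂) = W_G ∩ {ω ∈ ℝ^n : ∑_{i=1}^n ω_i h(x_i, θ₂) = 0}, and the empirical likelihood L(θ₂) = sup{∏_{i=1}^n ω_i : ω ∈ W(θ₂)} with L(θ₂) = 0 when W(θ₂) is empty. Suppose ν̂ ∈ W_G satisfies ∏_{i=1}^n ν̂_i ≥ ∏_{i=1}^n ω_i for all ω ∈ W_G, and suppose θ̃₂ ∈ Θ₂ satisfies ∑_{i=1}^n ν̂_i h(x_i, θ̃₂) = 0. Then L(θ̃₂) = ∏_{i=1}^n ν̂_i and L(θ₂) ≤ L(θ̃₂) for every θ₂ ∈ Θ₂; that is, θ̃₂ maximizes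 the conditional empirical likelihood θ₂ ↦ L(θ₂). -/
open Finset

/-- **Maximum conditional empirical likelihood estimator (Theorem 1).**
Given data `x 1, …, x n`, estimating functions `g` (not depending on `θ₂`) and `h`
(depending on `θ₂`), let `Δ` be the probability simplex, `W_G` the weights in the simplex
satisfying the `g`-constraints, `W θ₂` the weights additionally satisfying the
`h`-constraints at `θ₂`, and `L θ₂` the empirical likelihood, i.e. the supremum of the
product of the weights over `W θ₂` (with `sSup ∅ = 0` by the real-number convention,
matching the paper's definition of infeasibility).  If `νhat` maximizes the product of
weights over `W_G` and `θtilde` solves `∑ i, νhat i • h (x i) θtilde = 0`, then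
`L θtilde = ∏ i, νhat i` and `θtilde` maximizes `θ₂ ↦ L θ₂`. -/
theorem stmt_0 {X Θ₂ : Type*} {n l d : ℕ}
    (x : Fin n → X) (g : X → (Fin l → ℝ)) (h : X → Θ₂ → (Fin d → ℝ))
    (Δ : Set (Fin n → ℝ))
    (hΔ : Δ = {ω : Fin n → ℝ | (∀ i, 0 ≤ ω i) ∧ ∑ i, ω i = 1})
    (WG : Set (Fin n → ℝ))
    (hWG : WG = {ω ∈ Δ | ∑ i, ω i • g (x i) = 0})
    (W : Θ₂ → Set (Fin n → ℝ))
    (hW : ∀ θ₂, W θ₂ = WG ∩ {ω : Fin n → ℝ | ∑ i, ω i • h (x i) θ₂ = 0})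
    (L : Θ₂ → ℝ)
    (hL : ∀ θ₂, L θ₂ = sSup ((fun ω : Fin n → ℝ => ∏ i, ω i) '' (W θ₂)))
    (νhat : Fin n → ℝ) (hνhat : νhat ∈ WG)
    (hνhatmax : ∀ ω ∈ WG, ∏ i, ω i ≤ ∏ i, νhat i)
    (θtilde : Θ₂) (hθtilde : ∑ i, νhat i • h (x i) θtilde = 0) :
    L θtilde = ∏ i, νhat i ∧ ∀ θ₂ : Θ₂, L θ₂ ≤ L θtilde := by
  have hνΔ : νhat ∈ Δ := by
    rw [hWG] at hνhat; exact hνhat.1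
  have hνnonneg : 0 ≤ ∏ i, νhat i := by
    rw [hΔ] at hνΔ
    exact Finset.prod_nonneg fun i _ => hνΔ.1 i
  have hmem : νhat ∈ W θtilde := by
    rw [hW]; exact ⟨hνhat, hθtilde⟩
  have hub : ∀ θ₂, ∀ y ∈ (fun ω : Fin n → ℝ => ∏ i, ω i) '' (W θ₂), y ≤ ∏ i, νhat i := by
    intro θ₂ y hy
    obtain ⟨ω, hω, rfl⟩ := hy
    rw [hW] at hω
    exact hνhatmax ω hω.1
  have h1 : L θtilde = ∏ i, νhat i := by
    rw [hL]
    apply le_antisymm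
    · exact Real.sSup_le (hub θtilde) hνnonneg
    · exact le_csSup ⟨∏ i, νhat i, hub θtilde⟩ ⟨νhat, hmem, rfl⟩
  refine ⟨h1, fun θ₂ => ?_⟩
  rw [h1, hL]
  exact Real.sSup_le (hub θ₂) hνnonneg
end

section
/- Let (Ω, ℱ, P) be a probability space and let t ≥ 2. For s = 1,…,t+1 let X_s : Ω → ℝ^p and Y_s : Ω → ℝ^q be measurable random vectors. Suppose that: (i) X_{t+1} is conditionally independent of the tuple (X_1,…,X_{t-1}, Y_1,…,Y_t) given X_t, and (ii) Y_{t+1} is conditionally independent of the tuple (X_1,…,X_t, Y_1,…,Y_t) given X_{t+1}. Then the pair (X_{t+1}, Y_{t+1}) is conditionally independent of the tuple (X_1,…,X_{t-1}, Y_1,…,Y_{t-1}) given the pair (X_t, Y_t). In other words, the bivariate sequence (X_s, Y_s) is jointly a Markov chain. -/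
open MeasureTheory ProbabilityTheory MeasurableSpace Set Filter

section AuxLemmas

variable {Ω : Type*} [mΩ : MeasurableSpace Ω] [StandardBorelSpace Ω]
  {μ : MeasureTheory.Measure Ω} [IsProbabilityMeasure μ]


lemma aux_comap_prod {β γ : Type*} [mβ : MeasurableSpace β] [mγ : MeasurableSpace γ]
    (f : Ω → β) (g : Ω → γ) :
    MeasurableSpace.comap (fun ω => (f ω, g ω)) inferInstance
      = MeasurableSpace.comap f mβ ⊔ MeasurableSpace.comap g mγ := by
  have : (inferInstance : MeasurableSpace (β × γ))
      = mβ.comap Prod.fst ⊔ mγ.comap Prod.snd := rfl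
  rw [this, MeasurableSpace.comap_sup, MeasurableSpace.comap_comp,
    MeasurableSpace.comap_comp]
  rfl

lemma aux_comap_factor_le {β γ : Type*} [mβ : MeasurableSpace β] [mγ : MeasurableSpace γ]
    {f : Ω → β} {h : Ω → γ} {φ : β → γ} (hφ : Measurable φ) (hfac : ∀ ω, h ω = φ (f ω)) :
    MeasurableSpace.comap h mγ ≤ MeasurableSpace.comap f mβ := by
  have : h = φ ∘ f := funext hfac
  rw [this, ← MeasurableSpace.comap_comp]
  exact MeasurableSpace.comap_mono hφ.comap_le


lemma aux_doubling_indicator {m' m₁ m₂ : MeasurableSpace Ω}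
    (hm' : m' ≤ mΩ) (hm₁ : m₁ ≤ mΩ) (hm₂ : m₂ ≤ mΩ)
    (h : CondIndep m' m₁ m₂ hm' μ) {U : Set Ω} (hU : MeasurableSet[m₁] U) :
    (μ⟦U | m₂ ⊔ m'⟧) =ᵐ[μ] (μ⟦U | m'⟧) := by
  classical
  letI : MeasurableSpace Ω := mΩ
  have hsup : m₂ ⊔ m' ≤ mΩ := sup_le hm₂ hm'
  have hUM : MeasurableSet[mΩ] U := hm₁ U hU
  set f : Ω → ℝ := U.indicator (fun _ => (1:ℝ)) with hf_def
  have hf_int : Integrable f μ := (integrable_const (1:ℝ)).indicator hUM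
  set e : Ω → ℝ := μ⟦U | m'⟧ with he_def
  have he_int : Integrable e μ := integrable_condExp
  -- the π-system
  set piSys : Set (Set Ω) := {E | ∃ a b, MeasurableSet[m₂] a ∧ MeasurableSet[m'] b ∧ E = a ∩ b}
    with hpiSys_def
  have h_eq : m₂ ⊔ m' = MeasurableSpace.generateFrom piSys := by
    refine le_antisymm (sup_le ?_ ?_) (MeasurableSpace.generateFrom_le ?_)
    · intro a ha
      exact measurableSet_generateFrom ⟨a, Set.univ, ha, MeasurableSet.univ,
        (Set.inter_univ a).symm⟩
    · intro b hb
      exact measurableSet_generateFrom ⟨Set.univ, b, MeasurableSet.univ, hb,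
        (Set.univ_inter b).symm⟩
    · rintro E ⟨a, b, ha, hb, rfl⟩
      exact ((le_sup_left : m₂ ≤ m₂ ⊔ m') a ha).inter ((le_sup_right : m' ≤ m₂ ⊔ m') b hb)
  have h_inter : IsPiSystem piSys := by
    rintro E1 ⟨a1, b1, ha1, hb1, rfl⟩ E2 ⟨a2, b2, ha2, hb2, rfl⟩ -
    exact ⟨a1 ∩ a2, b1 ∩ b2, ha1.inter ha2, hb1.inter hb2, Set.inter_inter_inter_comm _ _ _ _⟩
  -- the key set-integral identity
  have key : ∀ E : Set Ω, MeasurableSet[m₂ ⊔ m'] E →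
      ∫ x in E, e x ∂μ = ∫ x in E, f x ∂μ := by
    intro E hE
    refine MeasurableSpace.induction_on_inter (m := m₂ ⊔ m')
      (C := fun E _ => ∫ x in E, e x ∂μ = ∫ x in E, f x ∂μ)
      h_eq h_inter (by simp) ?_ ?_ ?_ E hE
    · -- basic case
      rintro E ⟨a, b, ha, hb, rfl⟩
      have haM : MeasurableSet[mΩ] a := hm₂ a ha
      have hbM : MeasurableSet[mΩ] b := hm' b hb
      have hae : Integrable (a.indicator e) μ := he_int.indicator haM
      have haf : Integrable (a.indicator f) μ := hf_int.indicator haM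
      have h1a : Integrable (a.indicator (fun _ => (1:ℝ))) μ :=
        (integrable_const (1:ℝ)).indicator haM
      have ind_e : a.indicator e = e * a.indicator (fun _ => (1:ℝ)) := by
        funext x
        by_cases hx : x ∈ a <;>
          simp [Set.indicator_of_mem, Set.indicator_of_notMem, hx]
      have h_mul : Integrable (e * a.indicator fun _ => (1:ℝ)) μ := ind_e ▸ hae
      -- condexp of a.indicator e
      have step_e : (μ[a.indicator e | m']) =ᵐ[μ] e * (μ⟦a | m'⟧) := by
        rw [ind_e]
        exact condExp_mul_of_stronglyMeasurable_left stronglyMeasurable_condExp h_mul h1a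
      -- condexp of a.indicator f
      have ind_f : a.indicator f = (U ∩ a).indicator (fun _ => (1:ℝ)) := by
        rw [hf_def, Set.indicator_indicator, Set.inter_comm a U]
      have step_f : (μ[a.indicator f | m']) =ᵐ[μ] e * (μ⟦a | m'⟧) := by
        rw [ind_f]
        exact ((condIndep_iff m' m₁ m₂ hm' hm₁ hm₂ μ).mp h U a hU ha)
      calc ∫ x in a ∩ b, e x ∂μ = ∫ x in b, (a.indicator e) x ∂μ := by
            rw [setIntegral_indicator haM, Set.inter_comm b a]
        _ = ∫ x in b, (μ[a.indicator e | m']) x ∂μ :=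
            (setIntegral_condExp hm' hae hb).symm
        _ = ∫ x in b, (μ[a.indicator f | m']) x ∂μ := by
            refine integral_congr_ae (Filter.EventuallyEq.restrict ?_)
            exact step_e.trans step_f.symm
        _ = ∫ x in b, (a.indicator f) x ∂μ := setIntegral_condExp hm' haf hb
        _ = ∫ x in a ∩ b, f x ∂μ := by rw [setIntegral_indicator haM, Set.inter_comm b a]
    · -- complement
      intro E hE hEeq
      have hEM : MeasurableSet[mΩ] E := hsup E hE
      have h1 := integral_add_compl hEM he_int
      have h2 := integral_add_compl hEM hf_int
      have h3 : ∫ x, e x ∂μ = ∫ x, f x ∂μ := integral_condExp hm'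
      linarith
    · -- countable disjoint union
      intro g hdisj hgm hgeq
      have hgM : ∀ i, MeasurableSet[mΩ] (g i) := fun i => hsup _ (hgm i)
      rw [integral_iUnion hgM hdisj he_int.integrableOn,
        integral_iUnion hgM hdisj hf_int.integrableOn]
      exact tsum_congr hgeq
  refine (ae_eq_condExp_of_forall_setIntegral_eq hsup hf_int
    (fun s _ _ => he_int.integrableOn) (fun s hs _ => key s hs) ?_).symm
  exact (show StronglyMeasurable[m₂ ⊔ m'] e from stronglyMeasurable_condExp.mono (le_sup_right : m' ≤ m₂ ⊔ m')).aestronglyMeasurable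


lemma aux_doubling_bounded {m' m₁ m₂ : MeasurableSpace Ω}
    (hm' : m' ≤ mΩ) (hm₁ : m₁ ≤ mΩ) (hm₂ : m₂ ≤ mΩ)
    (h : CondIndep m' m₁ m₂ hm' μ) {φ : Ω → ℝ} (hφ : StronglyMeasurable[m₁] φ)
    (hφ0 : ∀ x, 0 ≤ φ x) (hφ1 : ∀ x, φ x ≤ 1) :
    μ[φ | m₂ ⊔ m'] =ᵐ[μ] μ[φ | m'] := by
  classical
  letI : MeasurableSpace Ω := mΩ
  have hsup : m₂ ⊔ m' ≤ mΩ := sup_le hm₂ hm'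
  have hφ_int : Integrable φ μ := by
    refine (integrable_const (1:ℝ)).mono' ((hφ.mono hm₁).aestronglyMeasurable)
      (Filter.Eventually.of_forall fun x => ?_)
    rw [Real.norm_eq_abs, abs_le]
    exact ⟨by linarith [hφ0 x], hφ1 x⟩
  have key : ∀ n : ℕ, ∀ᵐ x ∂μ,
      |(μ[φ | m₂ ⊔ m']) x - (μ[φ | m']) x| ≤ 2 * ((2:ℝ)^n)⁻¹ := by
    intro n
    set c : ℝ := (2:ℝ)^n with hc_def
    have hc : (0:ℝ) < c := by positivity
    set N : ℕ := 2^n with hN_def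
    have hcN : c = (N:ℝ) := by rw [hN_def, hc_def]; push_cast; ring
    set A : ℕ → Set Ω := fun k => φ ⁻¹' (Set.Ico ((k:ℝ)/c) (((k:ℝ)+1)/c)) with hA_def
    have hA : ∀ k, MeasurableSet[m₁] (A k) := fun k => hφ.measurable measurableSet_Ico
    have hAM : ∀ k, MeasurableSet[mΩ] (A k) := fun k => hm₁ _ (hA k)
    set ψ : Ω → ℝ := fun x =>
      ∑ k ∈ Finset.range (N+1), ((k:ℝ)/c) • (A k).indicator (fun _ => (1:ℝ)) x with hψ_def
    -- pointwise evaluation of ψ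
    have hψx : ∀ x, ψ x = ((⌊c * φ x⌋ : ℤ) : ℝ)/c ∧ |φ x - ψ x| ≤ c⁻¹ := by
      intro x
      set j : ℤ := ⌊c * φ x⌋ with hj_def
      have hj0 : 0 ≤ j := Int.floor_nonneg.mpr (mul_nonneg hc.le (hφ0 x))
      have hjle : (j:ℝ) ≤ c * φ x := Int.floor_le _
      have hjlt : c * φ x < (j:ℝ) + 1 := Int.lt_floor_add_one _
      have hjN : j.toNat ≤ N := by
        have h1 : c * φ x ≤ (N:ℝ) := by rw [← hcN]; nlinarith [hφ1 x]
        have h2 : j ≤ (N:ℤ) := by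
          have h3 := Int.floor_le_floor h1
          simpa using h3
        omega
      have hmem : x ∈ A j.toNat := by
        simp only [hA_def, Set.mem_preimage, Set.mem_Ico]
        have hcast : ((j.toNat : ℕ) : ℝ) = (j : ℝ) := by
          exact_mod_cast Int.toNat_of_nonneg hj0
        constructor
        · rw [hcast, div_le_iff₀ hc, mul_comm]; exact hjle
        · rw [hcast, lt_div_iff₀ hc, mul_comm]; exact hjlt
      have huniq : ∀ k ∈ Finset.range (N+1), k ≠ j.toNat →
          ((k:ℝ)/c) • (A k).indicator (fun _ => (1:ℝ)) x = 0 := by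
        intro k _ hk
        have : x ∉ A k := by
          intro hxk
          simp only [hA_def, Set.mem_preimage, Set.mem_Ico] at hxk
          obtain ⟨h1, h2⟩ := hxk
          rw [div_le_iff₀ hc] at h1
          rw [lt_div_iff₀ hc] at h2
          have hk1 : (k:ℤ) ≤ j := Int.le_floor.mpr (by push_cast; nlinarith)
          have hk2 : j < (k:ℤ) + 1 := Int.floor_lt.mpr (by push_cast; nlinarith)
          omega
        rw [Set.indicator_of_notMem this, smul_zero]
      have hψval : ψ x = ((j.toNat : ℕ) : ℝ)/c := by
        simp only [hψ_def]
        rw [Finset.sum_eq_single_of_mem j.toNat (Finset.mem_range.mpr (by omega)) huniq]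
        rw [Set.indicator_of_mem hmem, smul_eq_mul, mul_one]
      have hcast : ((j.toNat : ℕ) : ℝ) = (j : ℝ) := by
        exact_mod_cast Int.toNat_of_nonneg hj0
      refine ⟨by rw [hψval, hcast], ?_⟩
      rw [hψval, hcast, abs_le]
      have hlow : (j:ℝ)/c ≤ φ x := by rw [div_le_iff₀ hc]; nlinarith
      have hup : φ x < ((j:ℝ) + 1)/c := by rw [lt_div_iff₀ hc]; nlinarith
      have heq : ((j:ℝ)+1)/c = (j:ℝ)/c + c⁻¹ := by field_simp
      have hc0 : (0:ℝ) ≤ c⁻¹ := by positivity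
      constructor
      · linarith
      · linarith
      -- end pointwise
    have hterm_int : ∀ k : ℕ,
        Integrable (fun x => ((k:ℝ)/c) • (A k).indicator (fun _ => (1:ℝ)) x) μ := by
      intro k
      exact ((integrable_const (1:ℝ)).indicator (hAM k)).smul ((k:ℝ)/c)
    have hψ_int : Integrable ψ μ := by
      have hsum := integrable_finset_sum (μ := μ) (Finset.range (N+1))
        (f := fun (k : ℕ) (x : Ω) => ((k:ℝ)/c) • (A k).indicator (fun _ => (1:ℝ)) x)
        (fun k _ => hterm_int k)
      refine hsum.congr (Filter.Eventually.of_forall fun x => ?_)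
      simp [hψ_def, Finset.sum_apply]
    -- condexp of ψ
    have hψ_condexp : ∀ (M : MeasurableSpace Ω), M ≤ mΩ →
        μ[ψ | M] =ᵐ[μ] fun x => ∑ k ∈ Finset.range (N+1), ((k:ℝ)/c) • (μ⟦A k | M⟧) x := by
      intro M hM
      have hψeq : ψ = ∑ k ∈ Finset.range (N+1),
          fun x => ((k:ℝ)/c) • (A k).indicator (fun _ => (1:ℝ)) x := by
        funext x; simp [hψ_def, Finset.sum_apply]
      rw [hψeq]
      refine (condExp_finsetSum (fun k _ => hterm_int k) M).trans ?_
      have hsmul : ∀ k ∈ Finset.range (N+1),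
          μ[fun x => ((k:ℝ)/c) • (A k).indicator (fun _ => (1:ℝ)) x | M]
            =ᵐ[μ] ((k:ℝ)/c) • (μ⟦A k | M⟧) := by
        intro k _
        exact condExp_smul ((k:ℝ)/c) ((A k).indicator (fun _ => (1:ℝ))) M
      have hsmul' : ∀ᵐ x ∂μ, ∀ k ∈ Finset.range (N+1),
          (μ[fun x => ((k:ℝ)/c) • (A k).indicator (fun _ => (1:ℝ)) x | M]) x
            = (((k:ℝ)/c) • (μ⟦A k | M⟧)) x :=
        (Filter.eventually_all_finset _).mpr hsmul
      filter_upwards [hsmul'] with x hx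
      rw [Finset.sum_apply]
      exact Finset.sum_congr rfl fun k hk => (hx k hk)
    have hψd : μ[ψ | m₂ ⊔ m'] =ᵐ[μ] μ[ψ | m'] := by
      have hAk : ∀ k ∈ Finset.range (N+1), (μ⟦A k | m₂ ⊔ m'⟧) =ᵐ[μ] (μ⟦A k | m'⟧) :=
        fun k _ => aux_doubling_indicator hm' hm₁ hm₂ h (hA k)
      have hAk' : ∀ᵐ x ∂μ, ∀ k ∈ Finset.range (N+1),
          (μ⟦A k | m₂ ⊔ m'⟧) x = (μ⟦A k | m'⟧) x :=
        (Filter.eventually_all_finset _).mpr hAk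
      refine (hψ_condexp _ hsup).trans (Filter.EventuallyEq.trans ?_ (hψ_condexp _ hm').symm)
      filter_upwards [hAk'] with x hx
      exact Finset.sum_congr rfl fun k hk => by rw [hx k hk]
    -- bound on |μ[φ|M] - μ[ψ|M]|
    have hbound : ∀ (M : MeasurableSpace Ω), M ≤ mΩ →
        ∀ᵐ x ∂μ, |(μ[φ | M]) x - (μ[ψ | M]) x| ≤ c⁻¹ := by
      intro M hM
      have hsub : μ[φ | M] - μ[ψ | M] =ᵐ[μ] μ[φ - ψ | M] := (condExp_sub hφ_int hψ_int M).symm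
      have hub : μ[φ - ψ | M] ≤ᵐ[μ] μ[fun _ => c⁻¹ | M] := by
        refine condExp_mono (hφ_int.sub hψ_int) (integrable_const _)
          (Filter.Eventually.of_forall fun x => ?_)
        have hb := abs_le.mp (hψx x).2
        simpa [Pi.sub_apply] using hb.2
      have hlb : μ[fun _ => -c⁻¹ | M] ≤ᵐ[μ] μ[φ - ψ | M] := by
        refine condExp_mono (integrable_const _) (hφ_int.sub hψ_int)
          (Filter.Eventually.of_forall fun x => ?_)
        have hb := abs_le.mp (hψx x).2
        simpa [Pi.sub_apply] using hb.1
      have hc1 : μ[(fun _ => c⁻¹) | M] = fun _ => c⁻¹ := condExp_const hM _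
      have hc2 : μ[(fun _ => -c⁻¹) | M] = fun _ => -c⁻¹ := condExp_const hM _
      filter_upwards [hsub, hub, hlb] with x h1 h2 h3
      rw [abs_le]
      have hx1 : (μ[φ|M]) x - (μ[ψ|M]) x = (μ[φ - ψ|M]) x := by
        rw [← h1]; simp [Pi.sub_apply]
      constructor
      · rw [hx1]
        have h3' := h3
        rw [hc2] at h3'
        simpa using h3'
      · rw [hx1]
        have h2' := h2
        rw [hc1] at h2'
        simpa using h2'
    filter_upwards [hbound _ hsup, hbound _ hm', hψd] with x h1 h2 h3
    calc |(μ[φ|m₂ ⊔ m']) x - (μ[φ|m']) x|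
        ≤ |(μ[φ|m₂ ⊔ m']) x - (μ[ψ|m₂ ⊔ m']) x| + |(μ[ψ|m₂ ⊔ m']) x - (μ[φ|m']) x| :=
          abs_sub_le _ _ _
      _ = |(μ[φ|m₂ ⊔ m']) x - (μ[ψ|m₂ ⊔ m']) x| + |(μ[ψ|m']) x - (μ[φ|m']) x| := by rw [h3]
      _ ≤ c⁻¹ + c⁻¹ := add_le_add h1 (by rw [abs_sub_comm]; exact h2)
      _ = 2 * c⁻¹ := by ring
  have : ∀ᵐ x ∂μ, ∀ n : ℕ, |(μ[φ | m₂ ⊔ m']) x - (μ[φ | m']) x| ≤ 2 * ((2:ℝ)^n)⁻¹ :=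
    (ae_all_iff).mpr key
  filter_upwards [this] with x hx
  have htend : Filter.Tendsto (fun n : ℕ => 2 * ((2:ℝ)^n)⁻¹) Filter.atTop (nhds 0) := by
    have : Filter.Tendsto (fun n : ℕ => ((2:ℝ)⁻¹)^n) Filter.atTop (nhds 0) :=
      tendsto_pow_atTop_nhds_zero_of_lt_one (by norm_num) (by norm_num)
    have h2 := this.const_mul (2:ℝ)
    simpa [inv_pow] using h2
  have habs : |(μ[φ | m₂ ⊔ m']) x - (μ[φ | m']) x| ≤ 0 :=
    le_of_tendsto_of_tendsto' tendsto_const_nhds htend fun n => hx n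
  have : (μ[φ | m₂ ⊔ m']) x - (μ[φ | m']) x = 0 := by
    have := abs_nonneg ((μ[φ | m₂ ⊔ m']) x - (μ[φ | m']) x)
    have h0 : |(μ[φ | m₂ ⊔ m']) x - (μ[φ | m']) x| = 0 := le_antisymm habs this
    exact abs_eq_zero.mp h0
  linarith [this]


lemma aux_main {mA mZ mW mH mP mGoal mG1 : MeasurableSpace Ω}
    (hA : mA ≤ mΩ) (hZ : mZ ≤ mΩ) (hW : mW ≤ mΩ) (hH : mH ≤ mΩ) (hGoal : mGoal ≤ mΩ)
    (hAG : mA ≤ mGoal) (hGH : mGoal ≤ mH) (hPH : mP ≤ mH)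
    (hf1 : mG1 ⊔ mA = mH)
    (h1 : CondIndep mA mZ mG1 hA μ)
    (h2 : CondIndep mZ mW mH hZ μ) :
    CondIndep mGoal (mZ ⊔ mW) mP hGoal μ := by
  classical
  letI : MeasurableSpace Ω := mΩ
  have hG1 : mG1 ≤ mΩ := le_trans (le_trans le_sup_left hf1.le) hH
  have hn : mH ⊔ mZ ≤ mΩ := sup_le hH hZ
  have hP : mP ≤ mΩ := hPH.trans hH
  -- doubling consequences
  have P1 : ∀ {v : Set Ω}, MeasurableSet[mW] v → (μ⟦v | mH ⊔ mZ⟧) =ᵐ[μ] (μ⟦v | mZ⟧) :=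
    fun hv => aux_doubling_indicator hZ hW hH h2 hv
  have P2 : ∀ {φ : Ω → ℝ}, StronglyMeasurable[mZ] φ → (∀ x, 0 ≤ φ x) → (∀ x, φ x ≤ 1) →
      μ[φ | mH] =ᵐ[μ] μ[φ | mA] := by
    intro φ hφ h0 h1'
    have := aux_doubling_bounded hA hZ hG1 h1 hφ h0 h1'
    rwa [hf1] at this
  -- reduce to the rectangle π-system
  set p1 : Set (Set Ω) :=
    {E | ∃ u v, MeasurableSet[mZ] u ∧ MeasurableSet[mW] v ∧ E = u ∩ v} with hp1_def
  set p2 : Set (Set Ω) := {V | MeasurableSet[mP] V} with hp2_def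
  have hpm1 : mZ ⊔ mW = MeasurableSpace.generateFrom p1 := by
    refine le_antisymm (sup_le ?_ ?_) (MeasurableSpace.generateFrom_le ?_)
    · intro a ha
      exact measurableSet_generateFrom ⟨a, Set.univ, ha, MeasurableSet.univ,
        (Set.inter_univ a).symm⟩
    · intro b hb
      exact measurableSet_generateFrom ⟨Set.univ, b, MeasurableSet.univ, hb,
        (Set.univ_inter b).symm⟩
    · rintro E ⟨a, b, ha, hb, rfl⟩
      exact ((le_sup_left : mZ ≤ mZ ⊔ mW) a ha).inter ((le_sup_right : mW ≤ mZ ⊔ mW) b hb)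
  have hpm2 : mP = MeasurableSpace.generateFrom p2 :=
    (@MeasurableSpace.generateFrom_measurableSet Ω mP).symm
  have hp1sys : IsPiSystem p1 := by
    rintro E1 ⟨a1, b1, ha1, hb1, rfl⟩ E2 ⟨a2, b2, ha2, hb2, rfl⟩ -
    exact ⟨a1 ∩ a2, b1 ∩ b2, ha1.inter ha2, hb1.inter hb2, Set.inter_inter_inter_comm _ _ _ _⟩
  have hp2sys : IsPiSystem p2 := @MeasurableSpace.isPiSystem_measurableSet Ω mP
  refine CondIndepSets.condIndep (sup_le hZ hW) hP hp1sys hp2sys hpm1 hpm2 ?_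
  have hp1m : ∀ s ∈ p1, MeasurableSet[mΩ] s := by
    rintro E ⟨a, b, ha, hb, rfl⟩
    exact (hZ a ha).inter (hW b hb)
  have hp2m : ∀ s ∈ p2, MeasurableSet[mΩ] s := fun s hs => hP s hs
  refine (condIndepSets_iff mGoal hGoal p1 p2 hp1m hp2m μ).mpr ?_
  rintro E V ⟨u, v, hu, hv, rfl⟩ hV
  -- the core computation
  have hu' : MeasurableSet[mΩ] u := hZ u hu
  have hv' : MeasurableSet[mΩ] v := hW v hv
  have hVP : MeasurableSet[mP] V := hV
  have hVH : MeasurableSet[mH] V := hPH V hVP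
  have hV' : MeasurableSet[mΩ] V := hH V hVH
  have hv_int : Integrable (v.indicator fun _ => (1:ℝ)) μ := (integrable_const (1:ℝ)).indicator hv'
  -- the truncated conditional expectation
  set g : Ω → ℝ := μ[v.indicator (fun _ => (1:ℝ)) | mZ] with hg_def
  set g' : Ω → ℝ := fun x => max 0 (min (g x) 1) with hg'_def
  have hg_sm : StronglyMeasurable[mZ] g := stronglyMeasurable_condExp
  have hg'_sm : StronglyMeasurable[mZ] g' := by
    refine Measurable.stronglyMeasurable ?_
    exact (measurable_const.max ((hg_sm.measurable).min measurable_const))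
  have hgg' : g' =ᵐ[μ] g := by
    have h0 : 0 ≤ᵐ[μ] g := condExp_nonneg
      (Filter.Eventually.of_forall fun x => Set.indicator_nonneg (fun _ _ => zero_le_one) x)
    have h1' : g ≤ᵐ[μ] fun _ => (1:ℝ) := by
      have hmono := condExp_mono (μ := μ) (m := mZ) hv_int (integrable_const (1:ℝ))
        (Filter.Eventually.of_forall fun x =>
          Set.indicator_apply_le' (fun _ => le_refl (1:ℝ)) (fun _ => zero_le_one))
      have hconst : μ[(fun _ => (1:ℝ)) | mZ] = fun _ => (1:ℝ) := condExp_const hZ 1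
      filter_upwards [hmono] with x hx
      calc g x ≤ (μ[(fun _ => (1:ℝ)) | mZ]) x := hx
        _ = 1 := by rw [hconst]
    filter_upwards [h0, h1'] with x hx0 hx1
    have hx1' : g x ≤ 1 := hx1
    have hx0' : (0:ℝ) ≤ g x := hx0
    show max 0 (min (g x) 1) = g x
    rw [min_eq_left hx1', max_eq_right hx0']
  have hg'0 : ∀ x, 0 ≤ g' x := fun x => le_max_left _ _
  have hg'1 : ∀ x, g' x ≤ 1 := fun x => max_le zero_le_one (min_le_right _ _)
  -- sub-lemma R
  have R : ∀ S : Set Ω, MeasurableSet[mH ⊔ mZ] S → ∀ (K : MeasurableSpace Ω), K ≤ mH ⊔ mZ →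
      (μ⟦S ∩ v | K⟧) =ᵐ[μ] μ[S.indicator g' | K] := by
    intro S hS K hK
    have c1 : (μ⟦S ∩ v | mH ⊔ mZ⟧) =ᵐ[μ] S.indicator g' := by
      have e1 : (S ∩ v).indicator (fun _ => (1:ℝ)) = S.indicator (v.indicator fun _ => (1:ℝ)) :=
        (Set.indicator_indicator S v fun _ => (1:ℝ)).symm
      rw [show (μ⟦S ∩ v | mH ⊔ mZ⟧) = μ[S.indicator (v.indicator fun _ => (1:ℝ)) | mH ⊔ mZ] from
        by rw [← e1]]
      refine (condExp_indicator hv_int hS).trans ?_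
      filter_upwards [P1 hv, hgg'] with x h1x h2x
      by_cases hxS : x ∈ S
      · rw [Set.indicator_of_mem hxS, Set.indicator_of_mem hxS, h1x, ← hg_def, ← h2x]
      · rw [Set.indicator_of_notMem hxS, Set.indicator_of_notMem hxS]
    calc (μ⟦S ∩ v | K⟧)
        =ᵐ[μ] μ[(μ⟦S ∩ v | mH ⊔ mZ⟧) | K] := (condExp_condExp_of_le hK hn).symm
      _ =ᵐ[μ] μ[S.indicator g' | K] := condExp_congr_ae c1
  -- apply R
  have huN : MeasurableSet[mH ⊔ mZ] u := (le_sup_right : mZ ≤ mH ⊔ mZ) u hu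
  have hVN : MeasurableSet[mH ⊔ mZ] V := (le_sup_left : mH ≤ mH ⊔ mZ) V hVH
  have hKGoal : mGoal ≤ mH ⊔ mZ := hGH.trans le_sup_left
  have E2 : (μ⟦u ∩ v | mGoal⟧) =ᵐ[μ] μ[u.indicator g' | mGoal] := R u huN mGoal hKGoal
  have E1 : (μ⟦u ∩ v ∩ V | mGoal⟧) =ᵐ[μ] μ[V.indicator (u.indicator g') | mGoal] := by
    have hset : u ∩ v ∩ V = (u ∩ V) ∩ v := Set.inter_right_comm u v V
    have hind : (u ∩ V).indicator g' = V.indicator (u.indicator g') := by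
      rw [Set.indicator_indicator, Set.inter_comm V u]
    rw [hset]
    exact (R (u ∩ V) (huN.inter hVN) mGoal hKGoal).trans (by rw [hind])
  -- the mZ-measurable bounded function φ := u.indicator g'
  have hφ_sm : StronglyMeasurable[mZ] (u.indicator g') := hg'_sm.indicator hu
  have hφ0 : ∀ x, 0 ≤ u.indicator g' x := fun x => Set.indicator_nonneg (fun y _ => hg'0 y) x
  have hφ1 : ∀ x, u.indicator g' x ≤ 1 := fun x =>
    Set.indicator_apply_le' (fun _ => hg'1 x) (fun _ => zero_le_one)
  have hφ_int : Integrable (u.indicator g') μ := by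
    refine (integrable_const (1:ℝ)).mono' ((hφ_sm.mono hZ).aestronglyMeasurable)
      (Filter.Eventually.of_forall fun x => ?_)
    rw [Real.norm_eq_abs, abs_le]
    exact ⟨by linarith [hφ0 x], hφ1 x⟩
  -- the key replacement
  have hρ : μ[u.indicator g' | mH] =ᵐ[μ] μ[u.indicator g' | mA] := P2 hφ_sm hφ0 hφ1
  set ρ : Ω → ℝ := μ[u.indicator g' | mA] with hρ_def
  have hρ_smG : StronglyMeasurable[mGoal] ρ := stronglyMeasurable_condExp.mono hAG
  have E2' : μ[u.indicator g' | mGoal] =ᵐ[μ] ρ := by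
    calc μ[u.indicator g' | mGoal]
        =ᵐ[μ] μ[μ[u.indicator g' | mH] | mGoal] := (condExp_condExp_of_le hGH hH).symm
      _ =ᵐ[μ] μ[ρ | mGoal] := condExp_congr_ae hρ
      _ = ρ := condExp_of_stronglyMeasurable hGoal hρ_smG integrable_condExp
  have E1' : μ[V.indicator (u.indicator g') | mGoal] =ᵐ[μ] μ[V.indicator ρ | mGoal] := by
    calc μ[V.indicator (u.indicator g') | mGoal]
        =ᵐ[μ] μ[μ[V.indicator (u.indicator g') | mH] | mGoal] :=
          (condExp_condExp_of_le hGH hH).symm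
      _ =ᵐ[μ] μ[V.indicator ρ | mGoal] := by
          refine condExp_congr_ae ?_
          refine (condExp_indicator hφ_int hVH).trans ?_
          filter_upwards [hρ] with x hx
          by_cases hxV : x ∈ V
          · rw [Set.indicator_of_mem hxV, Set.indicator_of_mem hxV, hx]
          · rw [Set.indicator_of_notMem hxV, Set.indicator_of_notMem hxV]
  -- pull-out
  have hρ_bd : ∀ᵐ x ∂μ, ‖ρ x‖ ≤ 1 := by
    have h0 : 0 ≤ᵐ[μ] ρ := condExp_nonneg (Filter.Eventually.of_forall hφ0)
    have hmono := condExp_mono (μ := μ) (m := mA) hφ_int (integrable_const (1:ℝ))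
      (Filter.Eventually.of_forall hφ1)
    have hconst : μ[(fun _ => (1:ℝ)) | mA] = fun _ => (1:ℝ) := condExp_const hA 1
    filter_upwards [h0, hmono] with x hx0 hx1
    have hx0' : (0:ℝ) ≤ ρ x := hx0
    rw [Real.norm_eq_abs, abs_le]
    refine ⟨by linarith, ?_⟩
    calc ρ x ≤ (μ[(fun _ => (1:ℝ)) | mA]) x := hx1
      _ = 1 := by rw [hconst]
  have hmul_ind : V.indicator ρ = ρ * V.indicator (fun _ => (1:ℝ)) := by
    funext x
    by_cases hxV : x ∈ V <;>
      simp [Set.indicator_of_mem, Set.indicator_of_notMem, hxV]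
  have hVind_int : Integrable (V.indicator fun _ => (1:ℝ)) μ := (integrable_const _).indicator hV'
  have hmul_int : Integrable (ρ * V.indicator fun _ => (1:ℝ)) μ := by
    have := Integrable.bdd_mul (c := 1) hVind_int
      ((stronglyMeasurable_condExp.mono (hAG.trans hGoal)).aestronglyMeasurable) hρ_bd
    simpa [Pi.mul_def] using this
  have hpull : μ[ρ * V.indicator (fun _ => (1:ℝ)) | mGoal] =ᵐ[μ] ρ * (μ⟦V | mGoal⟧) :=
    condExp_mul_of_stronglyMeasurable_left hρ_smG hmul_int hVind_int
  calc (μ⟦u ∩ v ∩ V | mGoal⟧)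
      =ᵐ[μ] μ[V.indicator (u.indicator g') | mGoal] := E1
    _ =ᵐ[μ] μ[V.indicator ρ | mGoal] := E1'
    _ =ᵐ[μ] ρ * (μ⟦V | mGoal⟧) := by rw [hmul_ind]; exact hpull
    _ =ᵐ[μ] (μ⟦u ∩ v | mGoal⟧) * (μ⟦V | mGoal⟧) := by
        filter_upwards [E2, E2'] with x h2x h2'x
        simp only [Pi.mul_apply]
        rw [h2x, h2'x]



end AuxLemmas


open MeasureTheory ProbabilityTheory

/-- **Theorem 2 (Markov chain part).**
Let `X s : Ω → ℝ^p` and `Y s : Ω → ℝ^q` (for `s = 1, …, t+1`, with `t ≥ 2`) be measurable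
random vectors on a probability space.  If `X (t+1)` is conditionally independent of
`(X 1, …, X (t-1), Y 1, …, Y t)` given `X t`, and `Y (t+1)` is conditionally independent of
`(X 1, …, X t, Y 1, …, Y t)` given `X (t+1)`, then the pair `(X (t+1), Y (t+1))` is
conditionally independent of `(X 1, …, X (t-1), Y 1, …, Y (t-1))` given the pair
`(X t, Y t)`; i.e. the bivariate sequence `(X s, Y s)` is jointly a Markov chain. -/
theorem stmt_2 {Ω : Type*} [MeasurableSpace Ω] [StandardBorelSpace Ω] [Nonempty Ω]
    (μ : MeasureTheory.Measure Ω) [IsProbabilityMeasure μ]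
    (p q t : ℕ) (ht : 2 ≤ t)
    (X : ℕ → Ω → (Fin p → ℝ)) (Y : ℕ → Ω → (Fin q → ℝ))
    (hX : ∀ s, Measurable (X s)) (hY : ∀ s, Measurable (Y s))
    (h1 : CondIndepFun (MeasurableSpace.comap (X t) inferInstance) ((hX t).comap_le)
      (X (t + 1))
      (fun ω => ((fun s : Fin (t - 1) => X (s + 1) ω, fun s : Fin t => Y (s + 1) ω))) μ)
    (h2 : CondIndepFun (MeasurableSpace.comap (X (t + 1)) inferInstance)
      ((hX (t + 1)).comap_le)
      (Y (t + 1))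
      (fun ω => ((fun s : Fin t => X (s + 1) ω, fun s : Fin t => Y (s + 1) ω))) μ) :
    CondIndepFun
      (MeasurableSpace.comap (fun ω => (X t ω, Y t ω)) inferInstance)
      (((hX t).prodMk (hY t)).comap_le)
      (fun ω => (X (t + 1) ω, Y (t + 1) ω))
      (fun ω => ((fun s : Fin (t - 1) => X (s + 1) ω, fun s : Fin (t - 1) => Y (s + 1) ω))) μ := by
  have ht1 : t - 1 + 1 = t := Nat.sub_add_cancel (le_trans one_le_two ht)
  have htlt : t - 1 < t := by omega
  -- the generating functions
  set G2fun : Ω → (Fin t → (Fin p → ℝ)) × (Fin t → (Fin q → ℝ)) :=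
    fun ω => ((fun s : Fin t => X (s + 1) ω, fun s : Fin t => Y (s + 1) ω)) with hG2_def
  set G1fun : Ω → (Fin (t - 1) → (Fin p → ℝ)) × (Fin t → (Fin q → ℝ)) :=
    fun ω => ((fun s : Fin (t - 1) => X (s + 1) ω, fun s : Fin t => Y (s + 1) ω)) with hG1_def
  have hG2meas : Measurable G2fun := by
    rw [hG2_def]
    exact (measurable_pi_lambda (fun ω (s : Fin t) => X (s + 1) ω)
        (fun s => hX (s + 1))).prodMk
      (measurable_pi_lambda (fun ω (s : Fin t) => Y (s + 1) ω) (fun s => hY (s + 1)))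
  -- ≤ facts
  have hAG : MeasurableSpace.comap (X t) inferInstance
      ≤ MeasurableSpace.comap (fun ω => (X t ω, Y t ω)) inferInstance :=
    aux_comap_factor_le measurable_fst (fun ω => rfl)
  have hGH : MeasurableSpace.comap (fun ω => (X t ω, Y t ω)) inferInstance
      ≤ MeasurableSpace.comap G2fun inferInstance := by
    refine aux_comap_factor_le
      (φ := fun ab => (ab.1 ⟨t - 1, htlt⟩, ab.2 ⟨t - 1, htlt⟩))
      (((measurable_pi_apply _).comp measurable_fst).prodMk
        ((measurable_pi_apply _).comp measurable_snd)) (fun ω => ?_)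
    show (X t ω, Y t ω) = (X (t - 1 + 1) ω, Y (t - 1 + 1) ω)
    rw [ht1]
  have hPH : MeasurableSpace.comap
        (fun ω => ((fun s : Fin (t - 1) => X (s + 1) ω, fun s : Fin (t - 1) => Y (s + 1) ω)))
        inferInstance
      ≤ MeasurableSpace.comap G2fun inferInstance := by
    refine aux_comap_factor_le
      (φ := fun ab => ((fun s : Fin (t - 1) => ab.1 (Fin.castLE (Nat.sub_le t 1) s),
        fun s : Fin (t - 1) => ab.2 (Fin.castLE (Nat.sub_le t 1) s))))
      (((measurable_pi_lambda _ fun s => (measurable_pi_apply _).comp measurable_fst)).prodMk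
        ((measurable_pi_lambda _ fun s => (measurable_pi_apply _).comp measurable_snd)))
      (fun ω => rfl)
  have hf1 : MeasurableSpace.comap G1fun inferInstance
        ⊔ MeasurableSpace.comap (X t) inferInstance
      = MeasurableSpace.comap G2fun inferInstance := by
    refine le_antisymm (sup_le ?_ ?_) ?_
    · refine aux_comap_factor_le
        (φ := fun ab => ((fun s : Fin (t - 1) => ab.1 (Fin.castLE (Nat.sub_le t 1) s), ab.2)))
        (((measurable_pi_lambda _ fun s => (measurable_pi_apply _).comp measurable_fst)).prodMk
          measurable_snd) (fun ω => rfl)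
    · refine aux_comap_factor_le (φ := fun ab => ab.1 ⟨t - 1, htlt⟩)
        ((measurable_pi_apply _).comp measurable_fst) (fun ω => ?_)
      show X t ω = X (t - 1 + 1) ω
      rw [ht1]
    · have hpair : MeasurableSpace.comap (fun ω => (G1fun ω, X t ω)) inferInstance
          = MeasurableSpace.comap G1fun inferInstance
            ⊔ MeasurableSpace.comap (X t) inferInstance :=
        aux_comap_prod G1fun (X t)
      refine le_trans (aux_comap_factor_le
        (φ := fun x => ((fun s : Fin t => if h : (s : ℕ) < t - 1 then x.1.1 ⟨s, h⟩ else x.2,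
          x.1.2)))
        ?_ (fun ω => ?_)) hpair.le
      · refine Measurable.prodMk (measurable_pi_lambda _ fun s => ?_)
          (measurable_snd.comp measurable_fst)
        by_cases hs : (s : ℕ) < t - 1
        · simp only [dif_pos hs]
          exact (measurable_pi_apply _).comp (measurable_fst.comp measurable_fst)
        · simp only [dif_neg hs]
          exact measurable_snd
      · -- pointwise factorization
        refine Prod.ext ?_ rfl
        funext s
        by_cases hs : (s : ℕ) < t - 1
        · show X (s + 1) ω = if h : (s : ℕ) < t - 1 then X ((s : ℕ) + 1) ω else X t ω
          rw [dif_pos hs]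
        · show X (s + 1) ω = if h : (s : ℕ) < t - 1 then X ((s : ℕ) + 1) ω else X t ω
          rw [dif_neg hs]
          have hs' : (s : ℕ) + 1 = t := by have := s.isLt; omega
          rw [hs']
  rw [condIndepFun_iff_condIndep] at h1 h2 ⊢
  rw [aux_comap_prod (X (t + 1)) (Y (t + 1))]
  exact aux_main (hX t).comap_le (hX (t + 1)).comap_le (hY (t + 1)).comap_le
    hG2meas.comap_le (((hX t).prodMk (hY t)).comap_le) hAG hGH hPH hf1 h1 h2
end
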